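/- arXiv:2211.16128 — 5 statements merged into one kernel-verified Lean document; each statement's English description precedes it below -/
import Mathlib

section
/- For all integers a and b with a > b > 0, there exist integers s and t such that a divides s − b·t, 0 ≤ s and s² < a, and t ≠ 0 and t² ≤ a. (Equivalently: s ≡ b·t (mod a) with 0 ≤ s < √a and 0 < |t| ≤ √a.) -/
/-!
This is Thue's lemma. Among the `(m + 1)(k + 1) > a` integers `i - b j` with `0 ≤ i ≤ m`,
`0 ≤ j ≤ k`, two agree modulo `a`, and their difference gives `s - b t ≡ 0` with `|s| ≤ m`,
`|t| ≤ k`. Taking `m = ⌊√(a - 1)⌋` and `k = ⌊√a⌋` gives the bounds; `t ≠ 0` because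
`a ∣ s` with `|s| < a` forces `s = 0`.
-/

theorem Nat.lt_succ_sqrt_pred_mul_succ_sqrt {n : ℕ} (hn : 0 < n) :
    n < ((n - 1).sqrt + 1) * (n.sqrt + 1) := by
  have h₁ : n ≤ ((n - 1).sqrt + 1) ^ 2 := by
    have := Nat.lt_succ_sqrt' (n - 1)
    rw [Nat.succ_eq_add_one] at this
    omega
  have h₂ : n < (n.sqrt + 1) ^ 2 := Nat.lt_succ_sqrt' n
  nlinarith

theorem Int.exists_abs_le_dvd_sub_mul {n : ℕ} [NeZero n] (b : ℤ) {m k : ℕ}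
    (h : n < (m + 1) * (k + 1)) :
    ∃ x y : ℤ, (x, y) ≠ 0 ∧ |x| ≤ m ∧ |y| ≤ k ∧ (n : ℤ) ∣ x - b * y := by
  let f : Fin (m + 1) × Fin (k + 1) → ZMod n := fun p => ((p.1 - b * p.2 : ℤ) : ZMod n)
  obtain ⟨p, q, hpq, hfpq⟩ := Fintype.exists_ne_map_eq_of_card_lt f (by simpa using h)
  refine ⟨p.1 - q.1, p.2 - q.2, ?_, ?_, ?_, ?_⟩
  · contrapose! hpq
    simp only [Prod.mk_eq_zero, sub_eq_zero, Nat.cast_inj] at hpq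
    exact Prod.ext (Fin.ext hpq.1) (Fin.ext hpq.2)
  · exact abs_sub_le_of_nonneg_of_le (by positivity) (by simpa using Fin.is_le p.1)
      (by positivity) (by simpa using Fin.is_le q.1)
  · exact abs_sub_le_of_nonneg_of_le (by positivity) (by simpa using Fin.is_le p.2)
      (by positivity) (by simpa using Fin.is_le q.2)
  · have := (ZMod.intCast_eq_intCast_iff_dvd_sub _ _ n).mp hfpq.symm
    convert this using 1
    ring

theorem Int.exists_nonneg_le_dvd_sub_mul {n : ℕ} [NeZero n] (b : ℤ) {m k : ℕ}
    (h : n < (m + 1) * (k + 1)) :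
    ∃ x y : ℤ, (x, y) ≠ 0 ∧ 0 ≤ x ∧ x ≤ m ∧ |y| ≤ k ∧ (n : ℤ) ∣ x - b * y := by
  obtain ⟨x, y, hxy, hx, hy, hdvd⟩ := Int.exists_abs_le_dvd_sub_mul b h
  rcases le_total 0 x with hx₀ | hx₀
  · exact ⟨x, y, hxy, hx₀, (le_abs_self x).trans hx, hy, hdvd⟩
  · refine ⟨-x, -y, by simpa using hxy, neg_nonneg.mpr hx₀, (neg_le_abs x).trans hx,
      (abs_neg y).trans_le hy, ?_⟩
    simpa [neg_add_eq_sub] using hdvd.neg_right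

/-- Correctness of the `PartialXGCD` algorithm: for integers `a > b > 0` there
exist `s`, `t` with `s ≡ b·t (mod a)`, `0 ≤ s < √a` and `0 < |t| ≤ √a`,
the square-root bounds being expressed via squares. -/
theorem partialXGCD_exists (a b : ℤ) (hab : a > b) (hb : b > 0) :
    ∃ s t : ℤ, a ∣ (s - b * t) ∧ 0 ≤ s ∧ s ^ 2 < a ∧ t ≠ 0 ∧ t ^ 2 ≤ a := by
  lift a to ℕ using (by omega)
  have ha : 0 < a := by omega
  have : NeZero a := ⟨ha.ne'⟩
  obtain ⟨s, t, hst, hs₀, hs, ht, hdvd⟩ :=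
    Int.exists_nonneg_le_dvd_sub_mul b (Nat.lt_succ_sqrt_pred_mul_succ_sqrt ha)
  have hs_sq : s ^ 2 < a := by
    have := Nat.sqrt_le' (a - 1)
    calc s ^ 2 ≤ ((a - 1).sqrt : ℤ) ^ 2 := pow_le_pow_left₀ hs₀ hs 2
      _ < a := by exact_mod_cast (show (a - 1).sqrt ^ 2 < a by omega)
  have ht_sq : t ^ 2 ≤ a := by
    calc t ^ 2 = |t| ^ 2 := (sq_abs t).symm
      _ ≤ (a.sqrt : ℤ) ^ 2 := pow_le_pow_left₀ (abs_nonneg t) ht 2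
      _ ≤ a := by exact_mod_cast Nat.sqrt_le' a
  refine ⟨s, t, hdvd, hs₀, hs_sq, ?_, ht_sq⟩
  rintro rfl
  have hs_lt : |s| < a := by nlinarith [abs_of_nonneg hs₀]
  have hs_zero : s = 0 := Int.eq_zero_of_abs_lt_dvd (by simpa using hdvd) hs_lt
  exact hst (by simp [hs_zero])
end

section
/- Given integers a > b > 0, define integer sequences (r_k) and (t_k) by r₀ = a, r₁ = b, t₀ = 0, t₁ = 1, and for k ≥ 1: q_k = r_{k−1} div r_k (integer division, with the convention that division by zero yields 0), r_{k+1} = r_{k−1} − q_k·r_k, and t_{k+1} = t_{k−1} − q_k·t_k. Then for every natural number k with r_k > 0, we have r_k·|t_{k+1}| ≤ a. -/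
/-!
The remainders stay nonnegative, so every quotient `q_k` is nonnegative and the coefficients
`t_k` alternate in sign. A Euclidean step only flips the sign of the determinant
`t_{k+1} r_k - t_k r_{k+1}`, which therefore has absolute value `|t_1 r_0 - t_0 r_1| = a`.
Since `t_{k+1} r_k` and `-t_k r_{k+1}` have the same sign, `r_k |t_{k+1}|` is at most that
absolute value.
-/

theorem Int.sub_ediv_mul_nonneg {x : ℤ} (hx : 0 ≤ x) (y : ℤ) : 0 ≤ x - x / y * y := by
  rw [mul_comm, ← Int.emod_def]
  rcases eq_or_ne y 0 with rfl | hy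
  · simpa using hx
  · exact Int.emod_nonneg x hy

theorem mul_abs_le_abs_mul_sub_mul {r₀ r₁ t₀ t₁ : ℤ} (hr₀ : 0 ≤ r₀) (hr₁ : 0 ≤ r₁)
    (ht : t₀ * t₁ ≤ 0) : r₀ * |t₁| ≤ |t₁ * r₀ - t₀ * r₁| := by
  rcases lt_trichotomy t₁ 0 with h | rfl | h
  · have : 0 ≤ t₀ := by nlinarith
    rw [abs_of_neg h, abs_of_nonpos (by nlinarith)]
    nlinarith
  · simp only [abs_zero, mul_zero, zero_mul, zero_sub, abs_neg]
    positivity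
  · have : t₀ ≤ 0 := by nlinarith
    rw [abs_of_pos h, abs_of_nonneg (by nlinarith)]
    nlinarith

namespace PartialXGCD

variable {r t : ℕ → ℤ}

theorem remainder_nonneg (hr0 : 0 ≤ r 0) (hr1 : 0 ≤ r 1)
    (hrrec : ∀ k, r (k + 2) = r k - r k / r (k + 1) * r (k + 1)) (k : ℕ) : 0 ≤ r k := by
  induction k using Nat.twoStepInduction with
  | zero => exact hr0
  | one => exact hr1
  | more k ih _ => exact hrrec k ▸ Int.sub_ediv_mul_nonneg ih _

theorem coeff_mul_coeff_succ_nonpos (hr : ∀ k, 0 ≤ r k) (ht : t 0 * t 1 ≤ 0)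
    (htrec : ∀ k, t (k + 2) = t k - r k / r (k + 1) * t (k + 1)) (k : ℕ) :
    t k * t (k + 1) ≤ 0 := by
  induction k with
  | zero => exact ht
  | succ k ih =>
    have hq : 0 ≤ r k / r (k + 1) := Int.ediv_nonneg (hr k) (hr (k + 1))
    rw [htrec k]
    nlinarith [mul_self_nonneg (t (k + 1))]

theorem abs_det_eq (hrrec : ∀ k, r (k + 2) = r k - r k / r (k + 1) * r (k + 1))
    (htrec : ∀ k, t (k + 2) = t k - r k / r (k + 1) * t (k + 1)) (k : ℕ) :
    |t (k + 1) * r k - t k * r (k + 1)| = |t 1 * r 0 - t 0 * r 1| := by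
  induction k with
  | zero => rfl
  | succ k ih =>
    rw [hrrec k, htrec k, ← ih, ← abs_neg]
    ring_nf

end PartialXGCD

open PartialXGCD in
/-- Invariant `|s′·t| ≤ a` of `PartialXGCD`: for every `k` with `r k > 0`,
the product of the remainder `r k` and the absolute value of the next
`b`-coefficient `t (k+1)` is bounded by `a`. -/
theorem partialXGCD_invariant_product (a b : ℤ) (hab : a > b) (hb : b > 0)
    (r t : ℕ → ℤ)
    (hr0 : r 0 = a) (hr1 : r 1 = b) (ht0 : t 0 = 0) (ht1 : t 1 = 1)
    (hrrec : ∀ k : ℕ, 1 ≤ k → r (k + 1) = r (k - 1) - (r (k - 1) / r k) * r k)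
    (htrec : ∀ k : ℕ, 1 ≤ k → t (k + 1) = t (k - 1) - (r (k - 1) / r k) * t k) :
    ∀ k : ℕ, r k > 0 → r k * |t (k + 1)| ≤ a := by
  intro k _
  have hrrec' (k : ℕ) : r (k + 2) = r k - r k / r (k + 1) * r (k + 1) := by
    simpa using hrrec (k + 1) (by omega)
  have htrec' (k : ℕ) : t (k + 2) = t k - r k / r (k + 1) * t (k + 1) := by
    simpa using htrec (k + 1) (by omega)
  have hr := remainder_nonneg (by rw [hr0]; omega) (by rw [hr1]; omega) hrrec'
  have ht := coeff_mul_coeff_succ_nonpos hr (by simp [ht0]) htrec' k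
  calc r k * |t (k + 1)| ≤ |t (k + 1) * r k - t k * r (k + 1)| :=
        mul_abs_le_abs_mul_sub_mul (hr k) (hr (k + 1)) ht
    _ = a := by simp [abs_det_eq hrrec' htrec', hr0, ht0, ht1, abs_of_pos (by omega : 0 < a)]
end

section
/- Let N be a positive integer and let m, σ, t, t′ be integers such that N divides σ² − m and N divides t·t′ − 1. Suppose s is an integer with 0 ≤ s, s² < N, and N divides s − σ·t. Then s² is equal to the least nonnegative residue of m·t² modulo N, and N divides σ − s·t′. -/
namespace Int

theorem eq_emod_of_modEq {n a b : ℤ} (h : a ≡ b [ZMOD n]) (ha : 0 ≤ a) (han : a < n) :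
    a = b % n :=
  (emod_eq_of_lt ha han).symm.trans h

theorem ModEq.sq_modEq_mul_sq {n m σ t s : ℤ} (hσ : σ ^ 2 ≡ m [ZMOD n])
    (hs : σ * t ≡ s [ZMOD n]) : s ^ 2 ≡ m * t ^ 2 [ZMOD n] :=
  calc s ^ 2 ≡ (σ * t) ^ 2 [ZMOD n] := hs.symm.pow 2
    _ = σ ^ 2 * t ^ 2 := mul_pow σ t 2
    _ ≡ m * t ^ 2 [ZMOD n] := hσ.mul_right _

theorem ModEq.mul_inverse_modEq {n σ t t' s : ℤ} (hs : σ * t ≡ s [ZMOD n])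
    (ht : t * t' ≡ 1 [ZMOD n]) : s * t' ≡ σ [ZMOD n] :=
  calc s * t' ≡ σ * t * t' [ZMOD n] := hs.symm.mul_right _
    _ = σ * (t * t') := mul_assoc σ t t'
    _ ≡ σ * 1 [ZMOD n] := ht.mul_left _
    _ = σ := mul_one σ

end Int

theorem rabin_decompression_general (N m σ t t' s : ℤ)
    (hsig : N ∣ σ ^ 2 - m) (hinv : N ∣ t * t' - 1)
    (hs2 : s ^ 2 < N) (hst : N ∣ s - σ * t) :
    s ^ 2 = (m * t ^ 2) % N ∧ N ∣ σ - s * t' := by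
  have hσ : σ ^ 2 ≡ m [ZMOD N] := (Int.modEq_iff_dvd.mpr hsig).symm
  have ht : t * t' ≡ 1 [ZMOD N] := (Int.modEq_iff_dvd.mpr hinv).symm
  have hs : σ * t ≡ s [ZMOD N] := Int.modEq_iff_dvd.mpr hst
  exact ⟨Int.eq_emod_of_modEq (hσ.sq_modEq_mul_sq hs) (sq_nonneg s) hs2,
    (hs.mul_inverse_modEq ht).dvd⟩

/-- Correctness of decompression of Bleichenbacher-compressed Rabin
signatures: if `σ² ≡ m (mod N)`, `t·t′ ≡ 1 (mod N)`, and `s ≡ σ·t (mod N)`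
with `0 ≤ s` and `s² < N`, then `s²` equals the least nonnegative residue of
`m·t²` modulo `N`, and `σ ≡ s·t′ (mod N)`. -/
theorem rabin_decompression (N m σ t t' s : ℤ) (hN : 0 < N)
    (hsig : N ∣ σ ^ 2 - m) (hinv : N ∣ t * t' - 1)
    (hs0 : 0 ≤ s) (hs2 : s ^ 2 < N) (hst : N ∣ s - σ * t) :
    s ^ 2 = (m * t ^ 2) % N ∧ N ∣ σ - s * t' :=
  rabin_decompression_general N m σ t t' s hsig hinv hs2 hst
end

section
/- Let a, b, s, t be integers with a > 0 and t ≠ 0, such that a divides s − b·t. Let g = gcd(a, t), a′ = a/g, t′ = t/g. Then g divides s, and setting s′ = s/g: a′ divides s′ − b·t′, and gcd(a′, t′) = 1. Consequently, for any integer t″ such that a′ divides t′·t″ − 1, a′ divides b − s′·t″. -/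
/-- Decompression modulo `a′ = a/g`: with `g = gcd(a,t)`, `a′ = a/g`,
`t′ = t/g`, `s′ = s/g`, we have `g ∣ s`, `s′ ≡ b·t′ (mod a′)`,
`gcd(a′, t′) = 1`, and for any inverse `t″` of `t′` modulo `a′`,
`b ≡ s′·t″ (mod a′)`. -/
theorem classgroup_decompress_mod_a' (a b s t : ℤ) (ha : 0 < a) (ht : t ≠ 0)
    (hst : a ∣ s - b * t) :
    (Int.gcd a t : ℤ) ∣ s ∧
    (a / (Int.gcd a t : ℤ)) ∣ (s / (Int.gcd a t : ℤ) - b * (t / (Int.gcd a t : ℤ))) ∧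
    Int.gcd (a / (Int.gcd a t : ℤ)) (t / (Int.gcd a t : ℤ)) = 1 ∧
    ∀ t'' : ℤ, (a / (Int.gcd a t : ℤ)) ∣ (t / (Int.gcd a t : ℤ)) * t'' - 1 →
      (a / (Int.gcd a t : ℤ)) ∣ b - (s / (Int.gcd a t : ℤ)) * t'' := by
  set g : ℤ := (Int.gcd a t : ℤ) with hg
  have hga : g ∣ a := Int.gcd_dvd_left a t
  have hgt : g ∣ t := Int.gcd_dvd_right a t
  have hg0 : g ≠ 0 := by
    simp [hg, Int.gcd_eq_zero_iff]
    intro h; omega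
  have hgs : g ∣ s := by
    have : g ∣ s - b * t := dvd_trans hga hst
    have := dvd_add this (Dvd.dvd.mul_left hgt b)
    simpa using this
  refine ⟨hgs, ?_, ?_, ?_⟩
  · rcases hst with ⟨k, hk⟩
    refine ⟨k, ?_⟩
    have : g * (s / g - b * (t / g)) = g * ((a / g) * k) := by
      rw [mul_sub, Int.mul_ediv_cancel' hgs, ← mul_assoc, mul_comm g b, mul_assoc,
        Int.mul_ediv_cancel' hgt, ← mul_assoc, Int.mul_ediv_cancel' hga, hk]
    exact mul_left_cancel₀ hg0 this
  · exact Int.gcd_div_gcd_div_gcd (Int.gcd_pos_of_ne_zero_left t (by omega))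
  · intro t'' h1
    have h2 : (a / g) ∣ (s / g - b * (t / g)) := by
      rcases hst with ⟨k, hk⟩
      refine ⟨k, ?_⟩
      have : g * (s / g - b * (t / g)) = g * ((a / g) * k) := by
        rw [mul_sub, Int.mul_ediv_cancel' hgs, ← mul_assoc, mul_comm g b, mul_assoc,
          Int.mul_ediv_cancel' hgt, ← mul_assoc, Int.mul_ediv_cancel' hga, hk]
      exact mul_left_cancel₀ hg0 this
    have key : b - (s / g) * t'' = -((s / g - b * (t / g)) * t'') - b * ((t / g) * t'' - 1) := by
      ring
    rw [key]
    exact dvd_sub ((dvd_neg.mpr (Dvd.dvd.mul_right h2 t''))) (Dvd.dvd.mul_left h1 b)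
end

section
/- Let Δ, a, b be integers with a > 0 and 0 < b < a such that a divides b² − Δ. Let s, t be integers with a divides s − b·t, 0 ≤ s, s² < a, and t ≠ 0. Let g = gcd(a, t), a′ = a/g, t′ = t/g, and let f be a positive integer with lcm(f, a′) ≥ a. Set b₀ = b mod f and s′ = s/g (which is an integer, since g divides s). Then b is the unique integer b̂ satisfying: 0 ≤ b̂ < lcm(f, a′), f divides b̂ − b₀, and a′ divides b̂·t′ − s′. -/
/-- Correctness of class-group element compression/decompression in the main
case `0 < b < a`: with `a ∣ b² − Δ`, `s ≡ b·t (mod a)`, `0 ≤ s < √a`,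
`t ≠ 0`, `g = gcd(a,t)`, `a′ = a/g`, `t′ = t/g`, `s′ = s/g`, `b₀ = b mod f`,
and `lcm(f, a′) ≥ a`, the coefficient `b` is the unique integer `bhat` with
`0 ≤ bhat < lcm(f, a′)`, `bhat ≡ b₀ (mod f)` and `bhat·t′ ≡ s′ (mod a′)`. -/
theorem classgroup_compress_decompress_correct
    (Δ a b s t : ℤ) (ha : 0 < a) (hb0 : 0 < b) (hba : b < a)
    (hform : a ∣ b ^ 2 - Δ)
    (hst : a ∣ s - b * t) (hs0 : 0 ≤ s) (hs2 : s ^ 2 < a) (ht : t ≠ 0)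
    (g a' t' s' : ℤ)
    (hg : g = (Int.gcd a t : ℤ)) (ha' : a' = a / g) (ht' : t' = t / g)
    (hs' : s' = s / g)
    (f : ℤ) (hf : 0 < f) (hflcm : a ≤ (Int.lcm f a' : ℤ))
    (b₀ : ℤ) (hb₀ : b₀ = b % f) :
    (0 ≤ b ∧ b < (Int.lcm f a' : ℤ) ∧ f ∣ b - b₀ ∧ a' ∣ b * t' - s') ∧
    ∀ bhat : ℤ,
      (0 ≤ bhat ∧ bhat < (Int.lcm f a' : ℤ) ∧ f ∣ bhat - b₀ ∧ a' ∣ bhat * t' - s') →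
      bhat = b := by
  have hgcdne : Int.gcd a t ≠ 0 := fun h => ht (Int.gcd_eq_zero_iff.mp h).2
  have hg0 : 0 < g := by
    rw [hg]; exact_mod_cast Nat.pos_of_ne_zero hgcdne
  have hga : g ∣ a := hg ▸ Int.gcd_dvd_left a t
  have hgt : g ∣ t := hg ▸ Int.gcd_dvd_right a t
  have hgs : g ∣ s := by
    have h1 : g ∣ s - b * t := hga.trans hst
    have h2 : g ∣ b * t := Dvd.dvd.mul_left hgt b
    have := dvd_add h1 h2
    simpa using this
  have hae : a' * g = a := by rw [ha']; exact Int.ediv_mul_cancel hga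
  have hte : t' * g = t := by rw [ht']; exact Int.ediv_mul_cancel hgt
  have hse : s' * g = s := by rw [hs']; exact Int.ediv_mul_cancel hgs
  have hdvd' : a' ∣ b * t' - s' := by
    have : a' * g ∣ (b * t' - s') * g := by
      rw [hae]
      have : (b * t' - s') * g = -(s - b * t) := by
        rw [← hte, ← hse]; ring
      rw [this]
      exact dvd_neg.mpr hst
    exact (mul_dvd_mul_iff_right (ne_of_gt hg0)).mp this
  have ha'0 : 0 < a' := by
    rw [ha']
    exact Int.ediv_pos_of_pos_of_dvd ha hg0.le hga
  have hlcm0 : (0:ℤ) < (Int.lcm f a' : ℤ) := lt_of_lt_of_le ha hflcm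
  have hcop : IsCoprime a' t' := by
    rw [Int.isCoprime_iff_gcd_eq_one, ha', ht', hg]
    exact Int.gcd_div_gcd_div_gcd (Nat.pos_of_ne_zero hgcdne)
  have hfb : f ∣ b - b₀ := Int.dvd_self_sub_of_emod_eq hb₀.symm
  refine ⟨⟨hb0.le, lt_of_lt_of_le hba hflcm, hfb, hdvd'⟩, ?_⟩
  rintro bhat ⟨hb1, hb2, hb3, hb4⟩
  have hfd : f ∣ bhat - b := by
    have := dvd_sub hb3 hfb
    simpa using this
  have had : a' ∣ bhat - b := by
    have h : a' ∣ (bhat - b) * t' := by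
      have := dvd_sub hb4 hdvd'
      have e : bhat * t' - s' - (b * t' - s') = (bhat - b) * t' := by ring
      rwa [e] at this
    exact hcop.dvd_of_dvd_mul_right h
  have hld : (Int.lcm f a' : ℤ) ∣ bhat - b := Int.coe_lcm_dvd hfd had
  have : bhat - b = 0 := by
    refine Int.eq_zero_of_abs_lt_dvd hld ?_
    rw [abs_lt]
    constructor <;> omega
  omega
end
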